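/- The 4×4 matrix A with rows (1,1,2,2),(1,0,1,2),(2,1,0,1),(2,2,1,1) satisfies rank(A) = 3, rk₊(A) = 3, and st₊(A) = 4; in particular st₊(A) > rk₊(A). -/

import Mathlib

open Matrix

noncomputable def sntRank {m : Type*} [Fintype m] (A : Matrix m m ℝ) : ℕ :=
  sInf {k : ℕ | ∃ B : Matrix m (Fin k) ℝ, ∃ C : Matrix (Fin k) (Fin k) ℝ,
    (∀ i j, 0 ≤ B i j) ∧ (∀ i j, 0 ≤ C i j) ∧ C.IsSymm ∧ A = B * C * Bᵀ}


noncomputable def nnRank {m n : Type*} [Fintype m] [Fintype n] (A : Matrix m n ℝ) : ℕ :=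
  sInf {k : ℕ | ∃ U : Matrix m (Fin k) ℝ, ∃ V : Matrix n (Fin k) ℝ,
    (∀ i j, 0 ≤ U i j) ∧ (∀ i j, 0 ≤ V i j) ∧ A = U * Vᵀ}

/-!
Write `A` for the matrix, with indices from `0`. A factorisation `A = U Vᵀ` through `ℝ₊³` and a
nonsingular `3 × 3` principal minor give `rank A = rk₊ A = 3`, and `A = I A I` gives `st₊ A ≤ 4`.

Suppose `A = B C Bᵀ` with `B ≥ 0` of size `4 × 3` and `C ≥ 0` symmetric; `C` is nonsingular
because `rank A = 3`. The zero diagonal entries `A₁₁ = A₂₂ = 0` make `C` vanish on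
`supp B₁ × supp B₁` and on `supp B₂ × supp B₂`, while `A₁₂ = 1` gives `p ∈ supp B₁`, `q ∈ supp B₂`
with `C_pq > 0`; relabel so that `p = 0`, `q = 1`. A further index in `supp B₁` or `supp B₂` would
leave two rows of `C` supported in a single column, so `B₁` and `B₂` are multiples of `e₀` and
`e₁`. Then `A₀₁, A₀₂, A₃₁, A₃₂` express the rows `B₀`, `B₃` through `B₀₂`, `B₃₂`, and `A₀₃ = 2`
becomes `2βγ = 3 + C₂₂ B₀₂ B₃₂` where `β = C₀₂ B₁₀ B₀₂ ≤ 1` and `γ = C₁₂ B₂₁ B₃₂ ≤ 1` by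
`B₀₁, B₃₀ ≥ 0`: a contradiction.
-/

namespace Matrix

variable {m n o R : Type*} [Fintype n]

theorem rank_mul_le_width [CommSemiring R] [StrongRankCondition R] [Fintype o] {k : ℕ}
    (U : Matrix m (Fin k) R) (W : Matrix (Fin k) o R) : (U * W).rank ≤ k :=
  (rank_mul_le_left U W).trans <| (rank_le_card_width U).trans_eq (Fintype.card_fin k)

theorem isUnit_of_rank_eq_card [DecidableEq n] [Field R] {C : Matrix n n R}
    (h : C.rank = Fintype.card n) : IsUnit C := by
  rw [← mulVec_surjective_iff_isUnit]
  change Function.Surjective C.mulVecLin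
  rw [← LinearMap.range_eq_top]
  apply Submodule.eq_top_of_finrank_eq
  rw [← Matrix.rank, h, Module.finrank_fintype_fun_eq_card]

theorem det_ne_zero_of_rank_mul_mul_transpose [Fintype m] [DecidableEq n] [Field R]
    (B : Matrix m n R) (C : Matrix n n R) (h : (B * C * Bᵀ).rank = Fintype.card n) :
    C.det ≠ 0 := by
  have hC : C.rank = Fintype.card n :=
    (rank_le_card_width C).antisymm <| h ▸ (rank_mul_le_left _ _).trans (rank_mul_le_right _ _)
  exact ((isUnit_iff_isUnit_det C).1 (isUnit_of_rank_eq_card hC)).ne_zero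

theorem mul_mul_transpose_apply [CommSemiring R] (B : Matrix m n R) (C : Matrix n n R) (i j : m) :
    (B * C * Bᵀ) i j = ∑ p, ∑ q, B i p * C p q * B j q := by
  simp only [mul_apply, transpose_apply, Finset.sum_mul]
  exact Finset.sum_comm

theorem submatrix_mul_mul_transpose [CommSemiring R] (B : Matrix m n R) (C : Matrix n n R)
    (σ : n ≃ n) :
    B.submatrix id σ * C.submatrix σ σ * (B.submatrix id σ)ᵀ = B * C * Bᵀ := by
  rw [transpose_submatrix, submatrix_mul_equiv B C id σ σ,
    submatrix_mul_equiv (B * C) Bᵀ id σ id, submatrix_id_id]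

section Nonneg

variable [CommSemiring R] [PartialOrder R] {B : Matrix m n R} {C : Matrix n n R}

theorem mul_mul_transpose_apply_eq_zero [IsOrderedRing R] (hB : ∀ i j, 0 ≤ B i j)
    (hC : ∀ i j, 0 ≤ C i j) {i : m} (h : (B * C * Bᵀ) i i = 0) (p q : n) :
    B i p * C p q * B i q = 0 := by
  have hnn : ∀ p q, 0 ≤ B i p * C p q * B i q := fun p q =>
    mul_nonneg (mul_nonneg (hB i p) (hC p q)) (hB i q)
  rw [mul_mul_transpose_apply, Finset.sum_eq_zero_iff_of_nonneg
    fun p _ => Finset.sum_nonneg fun q _ => hnn p q] at h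
  exact (Finset.sum_eq_zero_iff_of_nonneg fun q _ => hnn p q).1 (h p (Finset.mem_univ _)) q
    (Finset.mem_univ _)

theorem exists_pos_of_mul_mul_transpose_apply_pos (hB : ∀ i j, 0 ≤ B i j)
    (hC : ∀ i j, 0 ≤ C i j) {i j : m} (h : 0 < (B * C * Bᵀ) i j) :
    ∃ p q, 0 < B i p ∧ 0 < C p q ∧ 0 < B j q := by
  rw [mul_mul_transpose_apply] at h
  obtain ⟨p, -, hp⟩ := Finset.exists_ne_zero_of_sum_ne_zero h.ne'
  obtain ⟨q, -, hpq⟩ := Finset.exists_ne_zero_of_sum_ne_zero hp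
  exact ⟨p, q, (hB i p).lt_of_ne' (left_ne_zero_of_mul (left_ne_zero_of_mul hpq)),
    (hC p q).lt_of_ne' (right_ne_zero_of_mul (left_ne_zero_of_mul hpq)),
    (hB j q).lt_of_ne' (right_ne_zero_of_mul hpq)⟩

end Nonneg

end Matrix

def exampleMatrix : Matrix (Fin 4) (Fin 4) ℝ := !![1,1,2,2; 1,0,1,2; 2,1,0,1; 2,2,1,1]

theorem exampleMatrix_eq_mul_transpose :
    exampleMatrix =
      !![(1 : ℝ),0,1; 1,0,0; 0,1,0; 0,1,1] * (!![(1 : ℝ),2,0; 0,1,1; 1,0,1; 2,1,0])ᵀ := by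
  ext i j
  fin_cases i <;> fin_cases j <;>
    simp [exampleMatrix, mul_apply, Fin.sum_univ_three, one_add_one_eq_two]

theorem rank_exampleMatrix : exampleMatrix.rank = 3 := by
  refine le_antisymm (exampleMatrix_eq_mul_transpose ▸ rank_mul_le_width _ _) ?_
  have hminor : exampleMatrix.submatrix Fin.castSucc Fin.castSucc = !![1,1,2; 1,0,1; 2,1,0] := by
    ext i j
    fin_cases i <;> fin_cases j <;> rfl
  have hdet : (!![1,1,2; 1,0,1; 2,1,0] : Matrix (Fin 3) (Fin 3) ℝ).det ≠ 0 := by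
    simp only [det_fin_three, of_apply, cons_val', cons_val_zero, cons_val_fin_one, cons_val_one,
      cons_val]
    norm_num
  calc 3 = (exampleMatrix.submatrix Fin.castSucc Fin.castSucc).rank := by
        rw [hminor, rank_of_det_ne_zero hdet, Fintype.card_fin]
    _ ≤ exampleMatrix.rank := rank_submatrix_le _ _ _

theorem nnRank_exampleMatrix : nnRank exampleMatrix = 3 := by
  refine IsLeast.csInf_eq ⟨⟨_, _, ?_, ?_, exampleMatrix_eq_mul_transpose⟩, ?_⟩
  · intro i j; fin_cases i <;> fin_cases j <;> norm_num
  · intro i j; fin_cases i <;> fin_cases j <;> norm_num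
  · rintro k ⟨U, V, -, -, hA⟩
    exact rank_exampleMatrix ▸ hA ▸ rank_mul_le_width U Vᵀ

-- `u`, `w` are the rows `B₀`, `B₃`; `X = B₁₀`, `Y = B₂₁`; `a, b, c, d = C₀₁, C₀₂, C₁₂, C₂₂`;
-- `eij` is the entry `Aᵢⱼ`.
theorem snt_equations_inconsistent {X Y a b c d u₀ u₁ u₂ w₀ w₁ w₂ : ℝ}
    (hX : 0 < X) (hY : 0 < Y) (hc : 0 ≤ c) (hd : 0 ≤ d)
    (hu₁ : 0 ≤ u₁) (hu₂ : 0 ≤ u₂) (hw₀ : 0 ≤ w₀) (hw₂ : 0 ≤ w₂)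
    (e12 : 1 = X * a * Y)
    (e01 : 1 = u₁ * a * X + u₂ * b * X)
    (e02 : 2 = u₀ * a * Y + u₂ * c * Y)
    (e31 : 2 = w₁ * a * X + w₂ * b * X)
    (e32 : 1 = w₀ * a * Y + w₂ * c * Y)
    (e03 : 2 = u₀ * a * w₁ + u₀ * b * w₂ + (u₁ * a * w₀ + u₁ * c * w₂) +
      (u₂ * b * w₀ + u₂ * c * w₁ + u₂ * d * w₂)) : False := by
  have hu₁' : u₁ = Y * (1 - b * X * u₂) := by linear_combination u₁ * e12 - Y * e01
  have hw₀' : w₀ = X * (1 - c * Y * w₂) := by linear_combination w₀ * e12 - X * e32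
  have hu₀' : u₀ = X * (2 - c * Y * u₂) := by linear_combination u₀ * e12 - X * e02
  have hw₁' : w₁ = Y * (2 - b * X * w₂) := by linear_combination w₁ * e12 - Y * e31
  have hβ : b * X * u₂ ≤ 1 := sub_nonneg.1 <| (mul_nonneg_iff_of_pos_left hY).1 (hu₁' ▸ hu₁)
  have hγ : c * Y * w₂ ≤ 1 := sub_nonneg.1 <| (mul_nonneg_iff_of_pos_left hX).1 (hw₀' ▸ hw₀)
  subst hu₁' hw₀' hu₀' hw₁'
  have key : 2 * ((b * X * u₂) * (c * Y * w₂)) = 3 + d * u₂ * w₂ := by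
    linear_combination (-((2 - c*Y*u₂)*(2 - b*X*w₂) + (1 - b*X*u₂)*(1 - c*Y*w₂))) * e12 + e03
  linarith [mul_le_one₀ hβ (mul_nonneg (mul_nonneg hc hY.le) hw₂) hγ,
    mul_nonneg (mul_nonneg hd hu₂) hw₂]

theorem exampleMatrix_ne_mul_mul_transpose_of_pos (B : Matrix (Fin 4) (Fin 3) ℝ)
    (C : Matrix (Fin 3) (Fin 3) ℝ)
    (hB : ∀ i j, 0 ≤ B i j) (hC : ∀ i j, 0 ≤ C i j) (hs : C.IsSymm)
    (hX : 0 < B 1 0) (ha : 0 < C 0 1) (hY : 0 < B 2 1) : exampleMatrix ≠ B * C * Bᵀ := by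
  intro hA
  have hentry : ∀ i j, exampleMatrix i j = ∑ p, ∑ q, B i p * C p q * B j q := fun i j => by
    rw [hA, mul_mul_transpose_apply]
  have hdet : C.det ≠ 0 := det_ne_zero_of_rank_mul_mul_transpose B C (hA ▸ rank_exampleMatrix)
  have h1 := mul_mul_transpose_apply_eq_zero hB hC (i := 1) (by rw [← hA]; simp [exampleMatrix])
  have h2 := mul_mul_transpose_apply_eq_zero hB hC (i := 2) (by rw [← hA]; simp [exampleMatrix])
  have hC00 : C 0 0 = 0 := by simpa [hX.ne'] using h1 0 0
  have hC11 : C 1 1 = 0 := by simpa [hY.ne'] using h2 1 1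
  have hB11 : B 1 1 = 0 := by simpa [hX.ne', ha.ne'] using h1 0 1
  have hB20 : B 2 0 = 0 := by simpa [hY.ne', hs.apply, ha.ne'] using h2 1 0
  -- Otherwise rows 0 and 2 (resp. 1 and 2) of `C` would both be supported in column 1 (resp. 0).
  have hB12 : B 1 2 = 0 := by
    by_contra h
    have hC02 : C 0 2 = 0 := by simpa [hX.ne', h] using h1 0 2
    have hC22 : C 2 2 = 0 := by simpa [h] using h1 2 2
    apply hdet
    rw [det_fin_three, hC00, hC11, hC02, hC22, hs.apply 0 1, hs.apply 0 2, hC02]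
    ring
  have hB22 : B 2 2 = 0 := by
    by_contra h
    have hC12 : C 1 2 = 0 := by simpa [hY.ne', h] using h2 1 2
    have hC22 : C 2 2 = 0 := by simpa [h] using h2 2 2
    apply hdet
    rw [det_fin_three, hC00, hC11, hC12, hC22, hs.apply 1 2, hC12]
    ring
  have e12 := hentry 1 2
  have e01 := hentry 0 1
  have e02 := hentry 0 2
  have e31 := hentry 3 1
  have e32 := hentry 3 2
  have e03 := hentry 0 3
  simp only [exampleMatrix, of_apply, cons_val', cons_val, cons_val_fin_one, cons_val_one,
    cons_val_zero, Fin.sum_univ_three, hB11, hB20, hB12, hB22, hC00, hC11, hs.apply, mul_zero,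
    zero_mul, add_zero, zero_add] at e12 e01 e02 e31 e32 e03
  exact snt_equations_inconsistent hX hY (hC 1 2) (hC 2 2) (hB 0 1) (hB 0 2) (hB 3 0) (hB 3 2)
    e12 e01 e02 e31 e32 e03

theorem Fin.exists_perm_three_apply_zero_apply_one {p q : Fin 3} (h : p ≠ q) :
    ∃ σ : Equiv.Perm (Fin 3), σ 0 = p ∧ σ 1 = q := by
  revert p q; decide

theorem exampleMatrix_ne_mul_mul_transpose (B : Matrix (Fin 4) (Fin 3) ℝ)
    (C : Matrix (Fin 3) (Fin 3) ℝ) (hB : ∀ i j, 0 ≤ B i j) (hC : ∀ i j, 0 ≤ C i j)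
    (hs : C.IsSymm) : exampleMatrix ≠ B * C * Bᵀ := by
  intro hA
  obtain ⟨p, q, hp, hpq, hq⟩ := exists_pos_of_mul_mul_transpose_apply_pos hB hC (i := 1) (j := 2)
    (by rw [← hA]; simp [exampleMatrix])
  have hne : p ≠ q := by
    rintro rfl
    have h1 := mul_mul_transpose_apply_eq_zero hB hC (i := 1) (by rw [← hA]; simp [exampleMatrix])
    exact (mul_pos (mul_pos hp hpq) hp).ne' (h1 p p)
  obtain ⟨σ, rfl, rfl⟩ := Fin.exists_perm_three_apply_zero_apply_one hne
  refine exampleMatrix_ne_mul_mul_transpose_of_pos (B.submatrix id σ) (C.submatrix σ σ)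
    (fun i j => hB i (σ j)) (fun i j => hC (σ i) (σ j)) (hs.submatrix σ) hp hpq hq ?_
  rw [submatrix_mul_mul_transpose, hA]

theorem sntRank_exampleMatrix : sntRank exampleMatrix = 4 := by
  refine IsLeast.csInf_eq ⟨⟨1, exampleMatrix, ?_, ?_, ?_, by simp⟩, ?_⟩
  · intro i j; rw [one_apply]; split_ifs <;> norm_num
  · intro i j; fin_cases i <;> fin_cases j <;> norm_num [exampleMatrix]
  · exact IsSymm.ext fun i j => by fin_cases i <;> fin_cases j <;> rfl
  · rintro k ⟨B, C, hB, hC, hs, hA⟩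
    have h3 : 3 ≤ k := by
      rw [← rank_exampleMatrix, hA, Matrix.mul_assoc]
      exact rank_mul_le_width B (C * Bᵀ)
    by_contra! hk
    obtain rfl : k = 3 := by omega
    exact exampleMatrix_ne_mul_mul_transpose B C hB hC hs hA

theorem stmt_13 :
    (!![(1:ℝ),1,2,2; 1,0,1,2; 2,1,0,1; 2,2,1,1]).rank = 3 ∧
    nnRank !![(1:ℝ),1,2,2; 1,0,1,2; 2,1,0,1; 2,2,1,1] = 3 ∧
    sntRank !![(1:ℝ),1,2,2; 1,0,1,2; 2,1,0,1; 2,2,1,1] = 4 ∧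
    nnRank !![(1:ℝ),1,2,2; 1,0,1,2; 2,1,0,1; 2,2,1,1] <
      sntRank !![(1:ℝ),1,2,2; 1,0,1,2; 2,1,0,1; 2,2,1,1] := by
  refine ⟨rank_exampleMatrix, nnRank_exampleMatrix, sntRank_exampleMatrix, ?_⟩
  change nnRank exampleMatrix < sntRank exampleMatrix
  rw [nnRank_exampleMatrix, sntRank_exampleMatrix]
  norm_num
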